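/- arXiv:2404.12225 — 2 statements merged into one kernel-verified Lean document; each statement's English description precedes it below -/
import Mathlib

section
/- Let k be a field, let A be an integral domain that is a finitely generated k-algebra, let K be the fraction field of A, and let R be the integral closure of A in K; assume R is finitely generated as an A-module. Let B be a k-subalgebra of K containing A, and suppose there exists a nonzero f ∈ A such that f⁻¹ ∈ B and for every b ∈ B there exists n ≥ 0 with fⁿ·b ∈ R. Then B equals the subring of K generated by B ∩ R and f⁻¹, and in particular B is a finitely generated k-algebra. -/
/-- Let `A` be a domain which is a finitely generated `k`-algebra, with fraction
field `K`, and let `R = integralClosure A K` be finitely generated as an `A`-module.  Let `B`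
be a `k`-subalgebra of `K` containing `A`, and suppose there is a nonzero `f ∈ A` with
`f⁻¹ ∈ B` and such that every `b ∈ B` satisfies `fⁿ·b ∈ R` for some `n ≥ 0`.  Then `B` is the
subring of `K` generated by `B ∩ R` and `f⁻¹`, and in particular `B` is a finitely generated
`k`-algebra. -/
theorem subalgebra_fg_of_bounded_poles
    {k A K : Type*} [Field k] [CommRing A] [IsDomain A] [Algebra k A]
    [Algebra.FiniteType k A] [Field K] [Algebra A K] [IsFractionRing A K]
    [Algebra k K] [IsScalarTower k A K]
    [Module.Finite A (integralClosure A K)]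
    (B : Subalgebra k K) (hAB : ∀ a : A, algebraMap A K a ∈ B)
    (f : A) (hf : f ≠ 0) (hfB : (algebraMap A K f)⁻¹ ∈ B)
    (hB : ∀ b ∈ B, ∃ n : ℕ, (algebraMap A K f) ^ n * b ∈ integralClosure A K) :
    B.toSubring = Subring.closure
        (((B : Set K) ∩ (integralClosure A K : Set K)) ∪ {(algebraMap A K f)⁻¹})
      ∧ B.FG := by
  classical
  have hg0 : algebraMap A K f ≠ 0 := fun h =>
    hf ((map_eq_zero_iff _ (IsFractionRing.injective A K)).mp h)
  -- key cancellation identity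
  have key : ∀ (n : ℕ) (b : K),
      ((algebraMap A K f)⁻¹) ^ n * ((algebraMap A K f) ^ n * b) = b := by
    intro n b
    rw [← mul_assoc, ← mul_pow, inv_mul_cancel₀ hg0, one_pow, one_mul]
  -- members of `B ∩ R` with the appropriate multiplier
  have hmem : ∀ b ∈ B, ∀ n : ℕ, (algebraMap A K f) ^ n * b ∈ B := fun b hb n =>
    B.mul_mem (B.pow_mem (hAB f) n) hb
  -- first conjunct
  have h1 : B.toSubring = Subring.closure
      (((B : Set K) ∩ (integralClosure A K : Set K)) ∪ {(algebraMap A K f)⁻¹}) := by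
    apply le_antisymm
    · intro b hb
      obtain ⟨n, hn⟩ := hB b hb
      have hbn : (algebraMap A K f) ^ n * b ∈
          ((B : Set K) ∩ (integralClosure A K : Set K)) ∪ {(algebraMap A K f)⁻¹} :=
        Or.inl ⟨hmem b hb n, hn⟩
      have h2 : (algebraMap A K f)⁻¹ ∈
          ((B : Set K) ∩ (integralClosure A K : Set K)) ∪ {(algebraMap A K f)⁻¹} :=
        Or.inr rfl
      have := Subring.mul_mem _
        (Subring.pow_mem _ (Subring.subset_closure h2) n) (Subring.subset_closure hbn)
      rwa [key n b] at this
    · rw [Subring.closure_le]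
      rintro x (⟨hxB, -⟩ | hx)
      · exact hxB
      · rw [Set.mem_singleton_iff] at hx
        rw [hx]
        exact hfB
  refine ⟨h1, ?_⟩
  -- Noetherian setup
  haveI : IsNoetherianRing A := Algebra.FiniteType.isNoetherianRing k A
  -- `B ∩ R` as an `A`-submodule of `K`
  set N : Submodule A K :=
    { carrier := (B : Set K) ∩ (integralClosure A K : Set K)
      add_mem' := fun hx hy => ⟨B.add_mem hx.1 hy.1, add_mem hx.2 hy.2⟩
      zero_mem' := ⟨B.zero_mem, zero_mem _⟩
      smul_mem' := fun a x hx => by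
        refine ⟨?_, (integralClosure A K).smul_mem hx.2 a⟩
        rw [Algebra.smul_def]
        exact B.mul_mem (hAB a) hx.1 } with hN
  have hNle : N ≤ Subalgebra.toSubmodule (integralClosure A K) := fun x hx => hx.2
  haveI : IsNoetherian A (Subalgebra.toSubmodule (integralClosure A K)) :=
    isNoetherian_of_isNoetherianRing_of_finite A (integralClosure A K)
  have hNfg : N.FG := by
    have h :=
      (IsNoetherian.noetherian
        (N.comap (Subalgebra.toSubmodule (integralClosure A K)).subtype)).map
        (Subalgebra.toSubmodule (integralClosure A K)).subtype
    rwa [Submodule.map_comap_subtype, inf_eq_right.mpr hNle] at h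
  obtain ⟨T, hT⟩ := hNfg
  -- generators of A as a k-algebra
  obtain ⟨s, hs⟩ := (Algebra.FiniteType.out : (⊤ : Subalgebra k A).FG)
  -- the candidate finite generating set for B
  refine ⟨s.image (algebraMap A K) ∪ T ∪ {(algebraMap A K f)⁻¹}, ?_⟩
  set C : Subalgebra k K :=
    Algebra.adjoin k ↑(s.image (algebraMap A K) ∪ T ∪ {(algebraMap A K f)⁻¹}) with hC
  have hsub : ∀ x ∈ s.image (algebraMap A K) ∪ T ∪ {(algebraMap A K f)⁻¹}, x ∈ C :=
    fun x hx => Algebra.subset_adjoin hx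
  -- the image of A lands in C
  have hAC : ∀ a : A, algebraMap A K a ∈ C := by
    intro a
    have : (IsScalarTower.toAlgHom k A K) a ∈
        (Algebra.adjoin k (s : Set A)).map (IsScalarTower.toAlgHom k A K) :=
      ⟨a, by rw [hs]; trivial, rfl⟩
    rw [AlgHom.map_adjoin] at this
    refine Algebra.adjoin_mono ?_ this
    intro x hx
    obtain ⟨a', ha', rfl⟩ := hx
    simp only [Finset.coe_union, Set.mem_union, Finset.coe_image]
    exact Or.inl (Or.inl ⟨a', ha', rfl⟩)
  -- N is contained in C
  have hNC : (N : Set K) ⊆ (C : Set K) := by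
    rw [← hT]
    intro x hx
    induction hx using Submodule.span_induction with
    | mem x hx =>
        exact hsub x (by
          simp only [Finset.mem_union]
          exact Or.inl (Or.inr hx))
    | zero => exact C.zero_mem
    | add x y _ _ hx hy => exact C.add_mem hx hy
    | smul a x _ hx =>
        rw [Algebra.smul_def]
        exact C.mul_mem (hAC a) hx
  have hfC : (algebraMap A K f)⁻¹ ∈ C := hsub _ (by simp)
  apply le_antisymm
  · -- C ≤ B
    rw [Algebra.adjoin_le_iff]
    intro x hx
    simp only [Finset.coe_union, Set.mem_union, Finset.coe_image, Finset.coe_singleton,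
      Set.mem_singleton_iff] at hx
    rcases hx with (⟨a, -, rfl⟩ | hx) | rfl
    · exact hAB a
    · have : x ∈ N := hT ▸ Submodule.subset_span hx
      exact this.1
    · exact hfB
  · -- B ≤ C
    intro b hb
    obtain ⟨n, hn⟩ := hB b hb
    have h2 : (algebraMap A K f) ^ n * b ∈ C := hNC ⟨hmem b hb n, hn⟩
    have := C.mul_mem (C.pow_mem hfC n) h2
    rwa [key n b] at this
end

section
/- For every m ≥ 0, the A^0-module Hom_{A^0}(A^m, A^0) of A^0-linear maps from A^m to A^0 is isomorphic as an A^0-module to A^0 if m is even, and to A^1 if m is odd. -/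
open MvPolynomial

noncomputable def permAction (n : ℕ) (k : Type*) [CommSemiring k] (σ : Equiv.Perm (Fin n)) :
    MvPolynomial (Fin n ⊕ Fin n) k →ₐ[k] MvPolynomial (Fin n ⊕ Fin n) k :=
  MvPolynomial.rename (Sum.map σ σ)

noncomputable def A0 (n : ℕ) (k : Type*) [CommSemiring k] :
    Subalgebra k (MvPolynomial (Fin n ⊕ Fin n) k) :=
  ⨅ σ : Equiv.Perm (Fin n), AlgHom.equalizer (permAction n k σ) (AlgHom.id k _)

lemma mem_A0 (n : ℕ) (k : Type*) [CommSemiring k] (p : MvPolynomial (Fin n ⊕ Fin n) k) :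
    p ∈ A0 n k ↔ ∀ σ : Equiv.Perm (Fin n), permAction n k σ p = p := by
  simp [A0, Algebra.mem_iInf, AlgHom.mem_equalizer]

noncomputable def A1 (n : ℕ) (k : Type*) [CommRing k] :
    Submodule (A0 n k) (MvPolynomial (Fin n ⊕ Fin n) k) where
  carrier := {p | ∀ σ : Equiv.Perm (Fin n),
    permAction n k σ p = (Equiv.Perm.sign σ : ℤ) • p}
  add_mem' := by
    intro a b ha hb σ
    simp [map_add, ha σ, hb σ, smul_add]
  zero_mem' := by intro σ; simp
  smul_mem' := by
    intro c p hp σ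
    have hc : permAction n k σ (algebraMap (A0 n k) _ c) = algebraMap (A0 n k) _ c :=
      (mem_A0 n k c).1 c.2 σ
    rw [Algebra.smul_def, map_mul, hp σ, hc]
    exact mul_smul_comm (Equiv.Perm.sign σ : ℤ) (algebraMap (A0 n k) _ c) p

noncomputable def Am (n : ℕ) (k : Type*) [CommRing k] (m : ℕ) :
    Submodule (A0 n k) (MvPolynomial (Fin n ⊕ Fin n) k) :=
  Submodule.span (A0 n k)
    {q | ∃ p : Fin m → MvPolynomial (Fin n ⊕ Fin n) k,
      (∀ i, p i ∈ A1 n k) ∧ q = ∏ i, p i}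

/-!
Let `Δₓ` and `Δ_y` be the Vandermonde determinants in the `x`- and in the `y`-variables. Both are
sign-semi-invariant, and they are coprime. Every element of `Aᵐ` transforms by `signᵐ`, so
multiplication by a `signᵐ`-semi-invariant `c` maps `Aᵐ` into `A⁰`. Conversely, let `f` be a
functional. As `Δₓᵐ · Aᵐ ⊆ A⁰`, linearity gives `u f(v) = v f(u)` for `u, v ∈ Aᵐ`. For
`u = Δₓᵐ`, `v = Δ_yᵐ` coprimality yields `Δₓᵐ ∣ f(Δₓᵐ)`, and `c = f(Δₓᵐ) / Δₓᵐ` is a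
`signᵐ`-semi-invariant with `f = c · (-)`. So the dual of `Aᵐ` is the module of
`signᵐ`-semi-invariants, which is `A⁰` or `A¹` according to the parity of `m`.
-/

open Equiv

section Functionals

variable {K R : Type*} [CommRing K] [CommRing R] [IsDomain R] [Algebra K R]
  {S : Subalgebra K R} {M : Submodule S R}

theorem mul_apply_comm_of_mul_mem {w : R} (hw : w ≠ 0) (hwM : ∀ u ∈ M, w * u ∈ S)
    (f : M →ₗ[S] S) (u v : M) : (u : R) * f v = v * f u := by
  have hswap : (⟨w * u, hwM u u.2⟩ : S) • v = (⟨w * v, hwM v v.2⟩ : S) • u :=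
    Subtype.ext (show w * u * v = w * v * u by ring)
  have := congrArg (fun x : M => ((f x : S) : R)) hswap
  simp only [map_smul, smul_eq_mul, Subalgebra.coe_mul] at this
  exact mul_left_cancel₀ hw (by linear_combination this)

theorem exists_forall_apply_eq_mul [DecompositionMonoid R] (w w' : M) (hw : (w : R) ≠ 0)
    (hwM : ∀ u ∈ M, (w : R) * u ∈ S) (hww' : IsRelPrime (w : R) w') (f : M →ₗ[S] S) :
    ∃ c : R, ∀ u : M, (f u : R) = c * u := by
  have hcomm := mul_apply_comm_of_mul_mem hw hwM f
  obtain ⟨c, hc⟩ : (w : R) ∣ f w :=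
    hww'.dvd_of_dvd_mul_left ⟨f w', by rw [hcomm w w', mul_comm]⟩
  refine ⟨c, fun u => mul_left_cancel₀ hw ?_⟩
  rw [hcomm w u, hc]
  ring

end Functionals

section SemiInvariants

variable {n : ℕ} {k : Type*} [CommRing k]

variable (n k) in
noncomputable def semiInvariants (χ : Perm (Fin n) →* ℤˣ) :
    Submodule (A0 n k) (MvPolynomial (Fin n ⊕ Fin n) k) where
  carrier := {p | ∀ σ, permAction n k σ p = (χ σ : ℤ) • p}
  add_mem' ha hb σ := by simp [ha σ, hb σ, smul_add]
  zero_mem' σ := by simp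
  smul_mem' c p hp σ := by
    rw [Algebra.smul_def, map_mul, hp σ, (mem_A0 n k (algebraMap (A0 n k) _ c)).1 c.2 σ]
    exact mul_smul_comm _ _ p

variable {χ ψ : Perm (Fin n) →* ℤˣ} {p q : MvPolynomial (Fin n ⊕ Fin n) k}

theorem mem_semiInvariants :
    p ∈ semiInvariants n k χ ↔ ∀ σ, permAction n k σ p = (χ σ : ℤ) • p := Iff.rfl

theorem semiInvariants_sign : semiInvariants n k Perm.sign = A1 n k := rfl

theorem mem_semiInvariants_one : p ∈ semiInvariants n k 1 ↔ p ∈ A0 n k := by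
  simp [mem_semiInvariants, mem_A0]

theorem mul_mem_semiInvariants (hp : p ∈ semiInvariants n k χ) (hq : q ∈ semiInvariants n k ψ) :
    p * q ∈ semiInvariants n k (χ * ψ) := fun σ => by
  rw [map_mul, hp σ, hq σ, smul_mul_smul_comm, MonoidHom.mul_apply, Units.val_mul]

theorem mul_mem_A0_of_mem_semiInvariants (hp : p ∈ semiInvariants n k χ)
    (hq : q ∈ semiInvariants n k χ) : p * q ∈ A0 n k := by
  have hχ : χ * χ = 1 := MonoidHom.ext fun σ => Int.units_mul_self (χ σ)
  rw [← mem_semiInvariants_one, ← hχ]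
  exact mul_mem_semiInvariants hp hq

theorem prod_mem_semiInvariants {m : ℕ} {p : Fin m → MvPolynomial (Fin n ⊕ Fin n) k}
    (hp : ∀ i, p i ∈ semiInvariants n k χ) : ∏ i, p i ∈ semiInvariants n k (χ ^ m) := by
  induction m with
  | zero => simp [mem_semiInvariants_one]
  | succ m ih =>
    rw [Fin.prod_univ_succ, pow_succ']
    exact mul_mem_semiInvariants (hp 0) (ih fun i => hp i.succ)

theorem Am_le_semiInvariants (m : ℕ) : Am n k m ≤ semiInvariants n k (Perm.sign ^ m) := by
  rw [Am, Submodule.span_le]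
  rintro _ ⟨p, hp, rfl⟩
  exact prod_mem_semiInvariants (semiInvariants_sign (n := n) (k := k) ▸ hp)

theorem sign_pow_of_even {m : ℕ} (hm : Even m) : (Perm.sign ^ m : Perm (Fin n) →* ℤˣ) = 1 :=
  MonoidHom.ext fun σ => by
    rw [MonoidHom.pow_apply, Int.units_pow_eq_pow_mod_two, Nat.even_iff.mp hm, pow_zero,
      MonoidHom.one_apply]

theorem sign_pow_of_odd {m : ℕ} (hm : Odd m) : (Perm.sign ^ m : Perm (Fin n) →* ℤˣ) = Perm.sign :=
  MonoidHom.ext fun σ => by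
    rw [MonoidHom.pow_apply, Int.units_pow_eq_pow_mod_two, Nat.odd_iff.mp hm, pow_one]

theorem mem_semiInvariants_of_mul_mem_A0 [IsDomain k] (hq : q ∈ semiInvariants n k χ)
    (hq0 : q ≠ 0) (hpq : p * q ∈ A0 n k) : p ∈ semiInvariants n k χ := fun σ => by
  have hσ : (χ σ : ℤ) • permAction n k σ p = p := by
    refine mul_right_cancel₀ hq0 ?_
    rw [smul_mul_assoc, ← mul_smul_comm, ← hq σ, ← map_mul, (mem_A0 n k _).1 hpq σ]
  calc permAction n k σ p = ((χ σ * χ σ : ℤˣ) : ℤ) • permAction n k σ p := by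
        rw [Int.units_mul_self, Units.val_one, one_smul]
    _ = (χ σ : ℤ) • p := by rw [Units.val_mul, mul_smul, hσ]

noncomputable def semiInvariantsOneEquiv : semiInvariants n k 1 ≃ₗ[A0 n k] A0 n k where
  toFun p := ⟨p, mem_semiInvariants_one.mp p.2⟩
  invFun p := ⟨p, mem_semiInvariants_one.mpr p.2⟩
  left_inv _ := rfl
  right_inv _ := rfl
  map_add' _ _ := rfl
  map_smul' _ _ := rfl

end SemiInvariants

section Vandermonde

variable {n : ℕ} {k : Type*}

theorem MvPolynomial.prime_X_sub_X [CommRing k] [IsDomain k] {σ : Type*} {i j : σ} (h : j ≠ i) :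
    Prime (X i - X j : MvPolynomial σ k) := by
  classical
  let e := (renameEquiv k (Equiv.optionSubtypeNe i).symm).trans
    (optionEquivLeft k {b : σ // b ≠ i})
  rw [← MulEquiv.prime_iff e.toMulEquiv]
  have he : e (X i - X j) = Polynomial.X - Polynomial.C (X ⟨j, h⟩) := by
    simp [e, Equiv.optionSubtypeNe_symm_of_ne h, optionEquivLeft_X_none, optionEquivLeft_X_some]
  exact he ▸ Polynomial.prime_X_sub_C _

variable (k) in
noncomputable def vandermondeDet [CommRing k] (e : Fin n → Fin n ⊕ Fin n) :
    MvPolynomial (Fin n ⊕ Fin n) k :=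
  (Matrix.vandermonde fun i => X (e i)).det

theorem vandermondeDet_mem_A1 [CommRing k] {e : Fin n → Fin n ⊕ Fin n}
    (he : ∀ (σ : Perm (Fin n)) i, Sum.map σ σ (e i) = e (σ i)) : vandermondeDet k e ∈ A1 n k := by
  intro σ
  have hmap : (permAction n k σ).mapMatrix (Matrix.vandermonde fun i => X (e i)) =
      (Matrix.vandermonde fun i => X (e i)).submatrix σ id := by
    ext i j
    simp [Matrix.vandermonde_apply, permAction, he]
  rw [vandermondeDet, AlgHom.map_det, hmap, Matrix.det_permute, zsmul_eq_mul]

theorem vandermondeDet_ne_zero [CommRing k] [IsDomain k] {e : Fin n → Fin n ⊕ Fin n}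
    (he : Function.Injective e) : vandermondeDet k e ≠ 0 := by
  rw [vandermondeDet, Ne, Matrix.det_vandermonde_eq_zero_iff]
  rintro ⟨i, j, hij, hne⟩
  exact hne (he (X_injective hij))

theorem isRelPrime_vandermondeDet_inl_inr [Field k] :
    IsRelPrime (vandermondeDet k (n := n) Sum.inl) (vandermondeDet k Sum.inr) := by
  rw [vandermondeDet, vandermondeDet, Matrix.det_vandermonde, Matrix.det_vandermonde]
  refine .prod_left fun i _ => .prod_left fun j hj =>
    .prod_right fun a _ => .prod_right fun b hb => ?_
  refine ((prime_X_sub_X ?_).irreducible.isRelPrime_iff_not_dvd).mpr fun hdvd => ?_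
  · simpa using (Finset.mem_Ioi.mp hj).ne
  -- setting all `x`-variables to zero kills `xⱼ - xᵢ` but not `y_b - y_a`
  have := map_dvd (aeval (Sum.elim 0 X : Fin n ⊕ Fin n → MvPolynomial (Fin n) k)) hdvd
  simp only [map_sub, aeval_X, Sum.elim_inl, Sum.elim_inr, Pi.zero_apply, sub_self,
    zero_dvd_iff, sub_eq_zero] at this
  exact (Finset.mem_Ioi.mp hb).ne' (X_injective this)

theorem vandermondeDet_pow_mem_Am [CommRing k] {e : Fin n → Fin n ⊕ Fin n}
    (he : ∀ (σ : Perm (Fin n)) i, Sum.map σ σ (e i) = e (σ i)) (m : ℕ) :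
    vandermondeDet k e ^ m ∈ Am n k m :=
  Submodule.subset_span ⟨fun _ => vandermondeDet k e, fun _ => vandermondeDet_mem_A1 he,
    by simp [Finset.prod_const]⟩

end Vandermonde

section Dual

variable {n : ℕ} {k : Type*}

noncomputable def mulFunctional [CommRing k] (m : ℕ) :
    semiInvariants n k (Perm.sign ^ m) →ₗ[A0 n k] (Am n k m →ₗ[A0 n k] A0 n k) :=
  LinearMap.mk₂ (A0 n k)
    (fun c p => ⟨c * p, mul_mem_A0_of_mem_semiInvariants c.2 (Am_le_semiInvariants m p.2)⟩)
    (fun _ _ _ => Subtype.ext (add_mul _ _ _)) (fun _ _ _ => Subtype.ext (mul_assoc _ _ _))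
    (fun _ _ _ => Subtype.ext (mul_add _ _ _)) (fun _ _ _ => Subtype.ext (mul_left_comm _ _ _))

theorem mulFunctional_bijective [Field k] (m : ℕ) :
    Function.Bijective (mulFunctional (n := n) (k := k) m) := by
  have hinl (σ : Perm (Fin n)) i : Sum.map σ σ (Sum.inl i) = Sum.inl (σ i) := rfl
  have hinr (σ : Perm (Fin n)) i : Sum.map σ σ (Sum.inr i) = Sum.inr (σ i) := rfl
  let w : Am n k m := ⟨_, vandermondeDet_pow_mem_Am hinl m⟩
  let w' : Am n k m := ⟨_, vandermondeDet_pow_mem_Am hinr m⟩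
  have hw : (w : MvPolynomial (Fin n ⊕ Fin n) k) ≠ 0 :=
    pow_ne_zero m (vandermondeDet_ne_zero Sum.inl_injective)
  have hwSI := Am_le_semiInvariants m w.2
  refine ⟨fun c d hcd => Subtype.ext (mul_right_cancel₀ hw congr(($hcd w).1)),
    fun f => ?_⟩
  obtain ⟨c, hc⟩ := exists_forall_apply_eq_mul w w' hw
    (fun u hu => mul_mem_A0_of_mem_semiInvariants hwSI (Am_le_semiInvariants m hu))
    isRelPrime_vandermondeDet_inl_inr.pow f
  have hcSI : c ∈ semiInvariants n k (Perm.sign ^ m) :=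
    mem_semiInvariants_of_mul_mem_A0 hwSI hw (hc w ▸ (f w).2)
  exact ⟨⟨c, hcSI⟩, LinearMap.ext fun u => Subtype.ext (hc u).symm⟩

end Dual

theorem dual_Am_general (k : Type*) [Field k]
    (n : ℕ) (m : ℕ) :
    (Even m → Nonempty
      ((↥(Am n k m) →ₗ[↥(A0 n k)] ↥(A0 n k)) ≃ₗ[↥(A0 n k)] ↥(A0 n k))) ∧
    (Odd m → Nonempty
      ((↥(Am n k m) →ₗ[↥(A0 n k)] ↥(A0 n k)) ≃ₗ[↥(A0 n k)] ↥(A1 n k))) := by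
  let e := (LinearEquiv.ofBijective _ (mulFunctional_bijective (n := n) (k := k) m)).symm
  refine ⟨fun hm => ⟨e.trans ((LinearEquiv.ofEq _ _ ?_).trans semiInvariantsOneEquiv)⟩,
    fun hm => ⟨e.trans (LinearEquiv.ofEq _ _ ?_)⟩⟩
  · rw [sign_pow_of_even hm]
  · rw [sign_pow_of_odd hm, semiInvariants_sign]

/-- for every `m ≥ 0`, the `A⁰`-module `Hom_{A⁰}(Aᵐ, A⁰)` is isomorphic as
an `A⁰`-module to `A⁰` if `m` is even, and to `A¹` if `m` is odd. -/
theorem dual_Am (k : Type*) [Field k] [IsAlgClosed k] [CharZero k]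
    (n : ℕ) (hn : 1 ≤ n) (m : ℕ) :
    (Even m → Nonempty
      ((↥(Am n k m) →ₗ[↥(A0 n k)] ↥(A0 n k)) ≃ₗ[↥(A0 n k)] ↥(A0 n k))) ∧
    (Odd m → Nonempty
      ((↥(Am n k m) →ₗ[↥(A0 n k)] ↥(A0 n k)) ≃ₗ[↥(A0 n k)] ↥(A1 n k))) :=
  dual_Am_general k n m
end
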